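/- Let w ∈ ℂ^r, v := 1 − w (componentwise), m ∈ {0,1}, and for a ∈ {0,1}^r set Q_a(w) := ∏_j cos(π(w_j−a_j)/2). Define Λ(w) := diag(π^{|w|/2}/∏_j Γ((w_j+a_j)/2))_{a∈{0,1}^r} and E := (−1)^m·diag((√−1)^{|a|})_{a∈{0,1}^r}. Then (Γ(w)/(2π)^{|w|})·A(w) = J·Λ(w)^{−1}·E·Λ(v)·Jᵀ, where A(w) is the 2^r×2^r matrix with (δ,ε)-entry (−1)^m·exp((π√−1/2)∑_j ε_jδ_jw_j) and J = 2^{−r/2}(κ_a)_a. -/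

import Mathlib

open Matrix

/-- The sign `±1` associated to a Boolean. -/
def sg (b : Bool) : ℂ := if b then 1 else -1

/-- The exponent `0` or `1` associated to a Boolean. -/
def aN (b : Bool) : ℕ := if b then 1 else 0

/-- The `2^r × 2^r` matrix `A(w)` with `(δ,ε)`-entry
`(-1)^m exp((π√-1/2) ∑_j ε_j δ_j w_j)`. -/
noncomputable def Amat (r m : ℕ) (w : Fin r → ℂ) :
    Matrix (Fin r → Bool) (Fin r → Bool) ℂ :=
  Matrix.of fun δ ε =>
    (-1 : ℂ) ^ m * Complex.exp ((Real.pi : ℂ) * Complex.I / 2 * ∑ j, sg (ε j) * sg (δ j) * w j)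

/-- The orthogonal matrix `J = 2^{-r/2}(κ_a)_a`. -/
noncomputable def Jmat (r : ℕ) : Matrix (Fin r → Bool) (Fin r → Bool) ℂ :=
  Matrix.of fun ε a => (((2 : ℝ) ^ (-(r : ℝ) / 2) : ℝ) : ℂ) * ∏ j, sg (ε j) ^ aN (a j)

/-- The diagonal matrix `Λ(w) = diag(π^{|w|/2} / ∏_j Γ((w_j + a_j)/2))_{a ∈ {0,1}^r}`. -/
noncomputable def Lam (r : ℕ) (w : Fin r → ℂ) :
    Matrix (Fin r → Bool) (Fin r → Bool) ℂ :=
  Matrix.diagonal fun a =>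
    (Real.pi : ℂ) ^ ((∑ j, w j) / 2) / ∏ j, Complex.Gamma ((w j + aN (a j)) / 2)

/-- The ε-factor `E = (-1)^m diag((√-1)^{|a|})_{a ∈ {0,1}^r}`. -/
noncomputable def Emat (r m : ℕ) : Matrix (Fin r → Bool) (Fin r → Bool) ℂ :=
  Matrix.diagonal fun a => (-1 : ℂ) ^ m * Complex.I ^ (∑ j, aN (a j))

/-! Both sides are tensor products over the `r` coordinates: `Λ(w)`, `E` and `Λ(1 - w)` are
diagonal with entries of the form `∏_j f_j(a_j)`, and conjugating such a diagonal matrix by `J`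
gives the matrix with `(δ,ε)`-entry `∏_j (f_j(0) + δ_j ε_j f_j(1)) / 2`. The identity thus
reduces to one variable, where it reads
`Γ(w/2)/Γ((1-w)/2) ± i Γ((w+1)/2)/Γ((2-w)/2) = 2^{1-w} π^{-1/2} Γ(w) e^{±πiw/2}`:
by reflection both quotients are `Γ(w/2) Γ((w+1)/2) / π` times `cos (πw/2)` resp.
`sin (πw/2)`, and by duplication `Γ(w/2) Γ((w+1)/2) = 2^{1-w} √π Γ(w)`. -/

open Complex
open scoped Real

lemma ofReal_pi_ne_zero : (π : ℂ) ≠ 0 := ofReal_ne_zero.mpr Real.pi_ne_zero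

lemma pi_cpow_ne_zero (y : ℂ) : (π : ℂ) ^ y ≠ 0 :=
  cpow_ne_zero_iff.mpr (.inl ofReal_pi_ne_zero)

lemma Complex.inv_Gamma_one_sub {s : ℂ} (hs : Gamma s ≠ 0) :
    (Gamma (1 - s))⁻¹ = Gamma s * sin (π * s) / π := by
  rw [mul_div_assoc, ← inv_div, ← Gamma_mul_Gamma_one_sub, mul_inv, mul_inv_cancel_left₀ hs]

lemma Complex.cpow_sum {x : ℂ} (hx : x ≠ 0) {ι : Type*} (s : Finset ι) (f : ι → ℂ) :
    x ^ (∑ i ∈ s, f i) = ∏ i ∈ s, x ^ f i := by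
  classical
  induction s using Finset.induction_on with
  | empty => simp
  | insert i s hi ih => rw [Finset.sum_insert hi, Finset.prod_insert hi, cpow_add _ _ hx, ih]

lemma Complex.cos_add_mul_I_mul_sin_eq_exp (x : ℂ) {s : ℂ} (hs : s = 1 ∨ s = -1) :
    cos x + s * I * sin x = exp (s * I * x) := by
  rw [show s * I * x = s * x * I by ring, exp_mul_I]
  rcases hs with rfl | rfl <;> simp <;> ring

lemma sg_mul_sg_eq_one_or (a b : Bool) : sg a * sg b = 1 ∨ sg a * sg b = -1 := by
  cases a <;> cases b <;> simp [sg]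

lemma Gamma_div_add_mul_I_mul_Gamma_div (w : ℂ) {s : ℂ} (hs : s = 1 ∨ s = -1)
    (h₀ : Gamma (w / 2) ≠ 0) (h₁ : Gamma ((w + 1) / 2) ≠ 0) :
    Gamma (w / 2) / Gamma ((1 - w) / 2) + s * I * (Gamma ((w + 1) / 2) / Gamma ((2 - w) / 2)) =
      Gamma w * 2 ^ (1 - w) * (√π : ℝ) / π * exp (s * I * (π * w / 2)) := by
  have hcos : (Gamma ((1 - w) / 2))⁻¹ = Gamma ((w + 1) / 2) * cos (π * w / 2) / π := by
    rw [show (1 - w) / 2 = 1 - (w + 1) / 2 by ring, inv_Gamma_one_sub h₁,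
      show π * ((w + 1) / 2) = π * w / 2 + π / 2 by ring, Complex.sin_add_pi_div_two]
  have hsin : (Gamma ((2 - w) / 2))⁻¹ = Gamma (w / 2) * sin (π * w / 2) / π := by
    rw [show (2 - w) / 2 = 1 - w / 2 by ring, inv_Gamma_one_sub h₀, mul_div_assoc']
  have hdup : Gamma (w / 2) * Gamma ((w + 1) / 2) = Gamma w * 2 ^ (1 - w) * (√π : ℝ) := by
    convert Gamma_mul_Gamma_add_half (w / 2) using 2 <;> ring_nf
  rw [div_eq_mul_inv (Gamma (w / 2)), div_eq_mul_inv (Gamma ((w + 1) / 2)), hcos, hsin,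
    ← cos_add_mul_I_mul_sin_eq_exp _ hs]
  linear_combination (cos (π * w / 2) + s * I * sin (π * w / 2)) / π * hdup

noncomputable def localLam (x : ℂ) (b : Bool) : ℂ :=
  (π : ℂ) ^ (x / 2) / Gamma ((x + aN b) / 2)

lemma localLam_ne_zero {x : ℂ} {b : Bool} (h : Gamma ((x + aN b) / 2) ≠ 0) :
    localLam x b ≠ 0 :=
  div_ne_zero (pi_cpow_ne_zero _) h

lemma Lam_eq_diagonal_prod (r : ℕ) (w : Fin r → ℂ) :
    Lam r w = diagonal fun a => ∏ j, localLam (w j) (a j) := by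
  rw [Lam]
  congr 1 with a
  rw [Finset.sum_div, cpow_sum ofReal_pi_ne_zero, ← Finset.prod_div_distrib]
  rfl

lemma localLam_functional_equation (w : ℂ) {s : ℂ} (hs : s = 1 ∨ s = -1)
    (h₀ : Gamma (w / 2) ≠ 0) (h₁ : Gamma ((w + 1) / 2) ≠ 0) :
    ((localLam w false)⁻¹ * I ^ aN false * localLam (1 - w) false +
        s * ((localLam w true)⁻¹ * I ^ aN true * localLam (1 - w) true)) / 2 =
      Gamma w / (2 * π) ^ w * exp (π * I / 2 * (s * w)) := by
  have hsqrt : (π : ℂ) ^ ((1 - w) / 2) * (π : ℂ) ^ (w / 2) = (√π : ℝ) := by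
    rw [← cpow_add _ _ ofReal_pi_ne_zero,
      show (1 - w) / 2 + w / 2 = ((1 / 2 : ℝ) : ℂ) by push_cast; ring,
      ← ofReal_cpow Real.pi_pos.le, Real.sqrt_eq_rpow]
  have hsq : (π : ℂ) ^ (w / 2) * (π : ℂ) ^ (w / 2) = (π : ℂ) ^ w := by
    rw [← cpow_add _ _ ofReal_pi_ne_zero, add_halves]
  have htwo : (2 : ℂ) ^ (1 - w) * 2 ^ w = 2 := by
    rw [← cpow_add _ _ two_ne_zero, sub_add_cancel, cpow_one]
  have hmul : (2 * (π : ℂ)) ^ w = 2 ^ w * (π : ℂ) ^ w := by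
    exact_mod_cast mul_cpow_ofReal_nonneg zero_le_two Real.pi_pos.le w
  have hroot : ((√π : ℝ) : ℂ) * (√π : ℝ) = π := by
    rw [← ofReal_mul, Real.mul_self_sqrt Real.pi_pos.le]
  have hP := pi_cpow_ne_zero (w / 2)
  have hR := pi_cpow_ne_zero w
  have hU : (2 : ℂ) ^ w ≠ 0 := cpow_ne_zero_iff.mpr (.inl two_ne_zero)
  simp only [localLam, aN, Bool.false_eq_true, if_false, if_true, Nat.cast_zero, Nat.cast_one,
    add_zero, pow_zero, pow_one, inv_div, show (1 - w + 1) / 2 = (2 - w) / 2 by ring]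
  rw [show π * I / 2 * (s * w) = s * I * (π * w / 2) by ring]
  calc _ = (π : ℂ) ^ ((1 - w) / 2) / (2 * (π : ℂ) ^ (w / 2)) *
        (Gamma (w / 2) / Gamma ((1 - w) / 2) +
          s * I * (Gamma ((w + 1) / 2) / Gamma ((2 - w) / 2))) := by ring
    _ = _ := by
      rw [Gamma_div_add_mul_I_mul_Gamma_div w hs h₀ h₁, hmul]
      field_simp
      set P := (π : ℂ) ^ (w / 2)
      set Q := (π : ℂ) ^ ((1 - w) / 2)
      set S : ℂ := ((√π : ℝ) : ℂ)
      linear_combination Gamma w * (Q * S * (π : ℂ) ^ w * htwo - 2 * Q * S * hsq +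
        2 * S * P * hsqrt + 2 * P * hroot)

lemma Matrix.inv_diagonal_of_ne_zero {n K : Type*} [Fintype n] [DecidableEq n] [Field K]
    {d : n → K} (hd : ∀ i, d i ≠ 0) : (diagonal d)⁻¹ = diagonal d⁻¹ := by
  refine inv_eq_right_inv ?_
  rw [diagonal_mul_diagonal, ← diagonal_one]
  exact congrArg diagonal (funext fun i => mul_inv_cancel₀ (hd i))

lemma Emat_eq_smul_diagonal_prod (r m : ℕ) :
    Emat r m = (-1 : ℂ) ^ m • diagonal fun a => ∏ j, I ^ aN (a j) := by
  rw [Emat, ← diagonal_smul]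
  congr 1 with a
  rw [Pi.smul_apply, smul_eq_mul, Finset.prod_pow_eq_pow_sum]

lemma inv_Lam_mul_Emat_mul_Lam (r m : ℕ) (w v : Fin r → ℂ)
    (hw : ∀ j b, Gamma ((w j + aN b) / 2) ≠ 0) :
    (Lam r w)⁻¹ * Emat r m * Lam r v = (-1 : ℂ) ^ m • diagonal fun a =>
      ∏ j, (localLam (w j) (a j))⁻¹ * I ^ aN (a j) * localLam (v j) (a j) := by
  have hd (a : Fin r → Bool) : ∏ j, localLam (w j) (a j) ≠ 0 :=
    Finset.prod_ne_zero_iff.mpr fun j _ => localLam_ne_zero (hw j (a j))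
  rw [Lam_eq_diagonal_prod, Lam_eq_diagonal_prod, Emat_eq_smul_diagonal_prod,
    Matrix.inv_diagonal_of_ne_zero hd,
    Matrix.mul_smul, Matrix.smul_mul, diagonal_mul_diagonal, diagonal_mul_diagonal]
  simp only [Pi.inv_apply, ← Finset.prod_inv_distrib, ← Finset.prod_mul_distrib]

lemma two_rpow_neg_half_mul_self (r : ℕ) :
    (((2 : ℝ) ^ (-(r : ℝ) / 2) : ℝ) : ℂ) * (((2 : ℝ) ^ (-(r : ℝ) / 2) : ℝ) : ℂ) =
      ∏ _j : Fin r, (2 : ℂ)⁻¹ := by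
  rw [← ofReal_mul, ← Real.rpow_add two_pos, show -(r : ℝ) / 2 + -(r : ℝ) / 2 = -r by ring,
    Real.rpow_neg zero_le_two, Real.rpow_natCast]
  simp

lemma Jmat_mul_diagonal_prod_mul_transpose_apply (r : ℕ) (f : Fin r → Bool → ℂ)
    (δ ε : Fin r → Bool) :
    (Jmat r * diagonal (fun a : Fin r → Bool => ∏ j, f j (a j)) * (Jmat r)ᵀ) δ ε =
      ∏ j, (f j false + sg (δ j) * sg (ε j) * f j true) / 2 := by
  rw [mul_apply]
  simp only [mul_diagonal, transpose_apply, Jmat, of_apply]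
  calc _ = ∑ a : Fin r → Bool,
        ∏ j, sg (δ j) ^ aN (a j) * f j (a j) * sg (ε j) ^ aN (a j) / 2 := by
        refine Finset.sum_congr rfl fun a _ => ?_
        simp only [div_eq_mul_inv, Finset.prod_mul_distrib, ← two_rpow_neg_half_mul_self]
        ring
    _ = ∏ j, ∑ b, sg (δ j) ^ aN b * f j b * sg (ε j) ^ aN b / 2 :=
        (Fintype.prod_sum fun j b => sg (δ j) ^ aN b * f j b * sg (ε j) ^ aN b / 2).symm
    _ = _ := Finset.prod_congr rfl fun j _ => by
      simp only [Fintype.sum_bool, aN, ↓reduceIte, Bool.false_eq_true, pow_one, pow_zero]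
      ring

theorem completed_gamma_matrix_general (r m : ℕ) (w : Fin r → ℂ)
    (hw : ∀ j, ∀ n : ℕ,
      w j ≠ -(n : ℂ) ∧ w j / 2 ≠ -(n : ℂ) ∧ (w j + 1) / 2 ≠ -(n : ℂ) ∧
        (1 - w j) / 2 ≠ -(n : ℂ) ∧ (2 - w j) / 2 ≠ -(n : ℂ)) :
    ((∏ j, Complex.Gamma (w j)) / ((2 : ℂ) * (Real.pi : ℂ)) ^ (∑ j, w j)) •
        Amat r m w =
      Jmat r * (Lam r w)⁻¹ * Emat r m * Lam r (fun j => 1 - w j) * (Jmat r)ᵀ := by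
  have h₀ j : Gamma (w j / 2) ≠ 0 := Gamma_ne_zero fun n => (hw j n).2.1
  have h₁ j : Gamma ((w j + 1) / 2) ≠ 0 := Gamma_ne_zero fun n => (hw j n).2.2.1
  have hΓ j b : Gamma ((w j + aN b) / 2) ≠ 0 := by
    cases b
    · simpa [aN] using h₀ j
    · simpa [aN] using h₁ j
  rw [Matrix.mul_assoc (Jmat r), Matrix.mul_assoc (Jmat r), inv_Lam_mul_Emat_mul_Lam r m w _ hΓ,
    Matrix.mul_smul, Matrix.smul_mul]
  ext δ ε
  rw [Matrix.smul_apply, Matrix.smul_apply, Jmat_mul_diagonal_prod_mul_transpose_apply r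
    fun j b => (localLam (w j) b)⁻¹ * I ^ aN b * localLam (1 - w j) b]
  simp only [Amat, of_apply, smul_eq_mul]
  have hexp : π * I / 2 * ∑ j, sg (ε j) * sg (δ j) * w j =
      ∑ j, π * I / 2 * (sg (δ j) * sg (ε j) * w j) := by
    rw [Finset.mul_sum]
    exact Finset.sum_congr rfl fun j _ => by ring
  rw [Finset.prod_congr rfl fun j _ =>
      localLam_functional_equation (w j) (sg_mul_sg_eq_one_or (δ j) (ε j)) (h₀ j) (h₁ j),
    Finset.prod_mul_distrib, Finset.prod_div_distrib,
    ← cpow_sum (mul_ne_zero two_ne_zero ofReal_pi_ne_zero), ← exp_sum, hexp]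
  ring

theorem completed_gamma_matrix (r m : ℕ) (hm : m = 0 ∨ m = 1) (w : Fin r → ℂ)
    (hw : ∀ j, ∀ n : ℕ,
      w j ≠ -(n : ℂ) ∧ w j / 2 ≠ -(n : ℂ) ∧ (w j + 1) / 2 ≠ -(n : ℂ) ∧
        (1 - w j) / 2 ≠ -(n : ℂ) ∧ (2 - w j) / 2 ≠ -(n : ℂ)) :
    ((∏ j, Complex.Gamma (w j)) / ((2 : ℂ) * (Real.pi : ℂ)) ^ (∑ j, w j)) •
        Amat r m w =
      Jmat r * (Lam r w)⁻¹ * Emat r m * Lam r (fun j => 1 - w j) * (Jmat r)ᵀ :=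
  completed_gamma_matrix_general r m w hw
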